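/- arXiv:1408.6795 — 2 statements merged into one kernel-verified Lean document; each statement's English description precedes it below -/
import Mathlib

section
/- For every t ≥ 0, the error function satisfies the bounds (1 − exp(−t²))^{1/2} ≤ erf(t) ≤ (1 − exp(−2t²))^{1/2}. -/
/-!
Feynman's trick. Put `I t = ∫₀ᵗ exp (-u²) du` and `G t = ∫₀¹ exp (-t² (1 + s²)) / (1 + s²) ds`.
Differentiating under the integral sign and substituting `u = t s` gives
`G' t = -2 exp (-t²) I t = -(I²)' t`, so `I² + G` is constant, equal to `G 0 = arctan 1 = π / 4`.
Hence `erf² = 1 - (4 / π) G`, and `1 ≤ 1 + s² ≤ 2` on `[0, 1]` squeezes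
`G t` between `(π / 4) exp (-2 t²)` and `(π / 4) exp (-t²)`.
-/

open Real

noncomputable def erf (t : ℝ) : ℝ := (2 / Real.sqrt π) * ∫ u in (0:ℝ)..t, Real.exp (-u ^ 2)

noncomputable def feynmanIntegral (t : ℝ) : ℝ :=
  ∫ s in (0:ℝ)..1, exp (-t ^ 2 * (1 + s ^ 2)) / (1 + s ^ 2)

lemma hasDerivAt_integral_exp_neg_sq (t : ℝ) :
    HasDerivAt (fun x => ∫ u in (0:ℝ)..x, exp (-u ^ 2)) (exp (-t ^ 2)) t :=
  ((by fun_prop : Continuous fun u : ℝ => exp (-u ^ 2)).integral_hasStrictDerivAt 0 t).hasDerivAt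

lemma integral_exp_neg_sq_eq_mul_integral (t : ℝ) :
    ∫ u in (0:ℝ)..t, exp (-u ^ 2) = t * ∫ s in (0:ℝ)..1, exp (-(t * s) ^ 2) := by
  simpa using (intervalIntegral.mul_integral_comp_mul_left (f := fun u => exp (-u ^ 2)) (c := t)
    (a := 0) (b := 1)).symm

lemma continuous_feynmanIntegrand (x : ℝ) :
    Continuous fun s : ℝ => exp (-x ^ 2 * (1 + s ^ 2)) / (1 + s ^ 2) := by
  fun_prop (disch := intro s; positivity)

lemma hasDerivAt_feynmanIntegrand (s x : ℝ) :
    HasDerivAt (fun x => exp (-x ^ 2 * (1 + s ^ 2)) / (1 + s ^ 2))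
      (-2 * x * exp (-x ^ 2) * exp (-(x * s) ^ 2)) x := by
  have hexponent : HasDerivAt (fun x : ℝ => -x ^ 2 * (1 + s ^ 2)) (-(2 * x) * (1 + s ^ 2)) x := by
    simpa using (hasDerivAt_pow 2 x).neg.mul_const (1 + s ^ 2)
  refine (hexponent.exp.div_const (1 + s ^ 2)).congr_deriv ?_
  rw [mul_assoc _ (exp _), ← exp_add, show -x ^ 2 * (1 + s ^ 2) = -x ^ 2 + -(x * s) ^ 2 by ring]
  field_simp

lemma norm_feynmanIntegrand_deriv_le (s x : ℝ) :
    ‖-2 * x * exp (-x ^ 2) * exp (-(x * s) ^ 2)‖ ≤ 2 * ‖x‖ := by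
  have h₁ : exp (-x ^ 2) ≤ 1 := exp_le_one_iff.2 (by nlinarith)
  have h₂ : exp (-(x * s) ^ 2) ≤ 1 := exp_le_one_iff.2 (by nlinarith)
  calc ‖-2 * x * exp (-x ^ 2) * exp (-(x * s) ^ 2)‖
      = 2 * ‖x‖ * exp (-x ^ 2) * exp (-(x * s) ^ 2) := by
        simp [norm_mul, abs_of_pos (exp_pos _)]
    _ ≤ 2 * ‖x‖ * 1 * 1 := by gcongr
    _ = 2 * ‖x‖ := by ring

lemma hasDerivAt_feynmanIntegral (t : ℝ) :
    HasDerivAt feynmanIntegral (-2 * exp (-t ^ 2) * ∫ u in (0:ℝ)..t, exp (-u ^ 2)) t := by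
  have hbound : ∀ s, ∀ x ∈ Metric.ball t 1,
      ‖-2 * x * exp (-x ^ 2) * exp (-(x * s) ^ 2)‖ ≤ 2 * (‖t‖ + 1) := fun s x hx =>
    (norm_feynmanIntegrand_deriv_le s x).trans (by linarith [norm_lt_of_mem_ball hx])
  have h := intervalIntegral.hasDerivAt_integral_of_dominated_loc_of_deriv_le
    (a := 0) (b := 1) (μ := MeasureTheory.volume) (bound := fun _ => 2 * (‖t‖ + 1))
    (Metric.ball_mem_nhds t one_pos)
    (.of_forall fun x => (continuous_feynmanIntegrand x).aestronglyMeasurable)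
    ((continuous_feynmanIntegrand t).intervalIntegrable 0 1)
    (by fun_prop : Continuous _).aestronglyMeasurable
    (.of_forall fun s _ => hbound s) intervalIntegrable_const
    (.of_forall fun s _ x _ => hasDerivAt_feynmanIntegrand s x)
  refine h.2.congr_deriv ?_
  rw [integral_exp_neg_sq_eq_mul_integral, intervalIntegral.integral_const_mul]
  ring

lemma integral_div_one_add_sq_zero_one (a : ℝ) :
    ∫ s in (0:ℝ)..1, a / (1 + s ^ 2) = π / 4 * a := by
  simp_rw [div_eq_mul_inv]
  rw [intervalIntegral.integral_const_mul, integral_inv_one_add_sq, arctan_one, arctan_zero]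
  ring

lemma feynmanIntegral_zero : feynmanIntegral 0 = π / 4 := by
  simp [feynmanIntegral]

lemma sq_integral_exp_neg_sq_add_feynmanIntegral (t : ℝ) :
    (∫ u in (0:ℝ)..t, exp (-u ^ 2)) ^ 2 + feynmanIntegral t = π / 4 := by
  have hderiv : ∀ x, HasDerivAt
      (fun y => (∫ u in (0:ℝ)..y, exp (-u ^ 2)) ^ 2 + feynmanIntegral y) 0 x := fun x =>
    (((hasDerivAt_integral_exp_neg_sq x).pow 2).add (hasDerivAt_feynmanIntegral x)).congr_deriv
      (by ring)
  have hconst := is_const_of_deriv_eq_zero (fun x => (hderiv x).differentiableAt)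
    (fun x => (hderiv x).deriv) t 0
  simpa [feynmanIntegral_zero] using hconst

lemma feynmanIntegral_le (t : ℝ) : feynmanIntegral t ≤ π / 4 * exp (-t ^ 2) := by
  rw [← integral_div_one_add_sq_zero_one]
  refine intervalIntegral.integral_mono_on zero_le_one
    ((continuous_feynmanIntegrand t).intervalIntegrable 0 1)
    ((by fun_prop (disch := intro s; positivity) : Continuous _).intervalIntegrable 0 1) ?_
  intro s _
  gcongr ?_ / _
  exact exp_le_exp.2 (by nlinarith [sq_nonneg (t * s)])

lemma le_feynmanIntegral (t : ℝ) : π / 4 * exp (-2 * t ^ 2) ≤ feynmanIntegral t := by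
  rw [← integral_div_one_add_sq_zero_one]
  refine intervalIntegral.integral_mono_on zero_le_one
    ((by fun_prop (disch := intro s; positivity) : Continuous _).intervalIntegrable 0 1)
    ((continuous_feynmanIntegrand t).intervalIntegrable 0 1) ?_
  rintro s ⟨hs₀, hs₁⟩
  gcongr ?_ / _
  refine exp_le_exp.2 ?_
  nlinarith [sq_nonneg t, mul_le_mul hs₁ hs₁ hs₀ zero_le_one]

lemma erf_sq (t : ℝ) : erf t ^ 2 = 1 - 4 / π * feynmanIntegral t := by
  rw [erf, mul_pow, div_pow, sq_sqrt pi_pos.le,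
    eq_sub_of_add_eq (sq_integral_exp_neg_sq_add_feynmanIntegral t)]
  field_simp
  ring

lemma erf_nonneg {t : ℝ} (ht : 0 ≤ t) : 0 ≤ erf t :=
  mul_nonneg (by positivity) (intervalIntegral.integral_nonneg ht fun u _ => (exp_pos _).le)

/-- For every t ≥ 0, `(1 − exp(−t²))^(1/2) ≤ erf(t) ≤ (1 − exp(−2t²))^(1/2)`. -/
theorem erf_bounds (t : ℝ) (ht : 0 ≤ t) :
    Real.sqrt (1 - Real.exp (-t ^ 2)) ≤ erf t ∧
      erf t ≤ Real.sqrt (1 - Real.exp (-2 * t ^ 2)) := by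
  have hπ : 0 ≤ 4 / π := by positivity
  have hscale (x : ℝ) : 4 / π * (π / 4 * x) = x := by field_simp
  constructor
  · rw [sqrt_le_left (erf_nonneg ht), erf_sq]
    linarith [hscale (exp (-t ^ 2)), mul_le_mul_of_nonneg_left (feynmanIntegral_le t) hπ]
  · refine (le_abs_self _).trans (abs_le_sqrt ?_)
    rw [erf_sq]
    linarith [hscale (exp (-2 * t ^ 2)), mul_le_mul_of_nonneg_left (le_feynmanIntegral t) hπ]
end

section
/- Let A be a real m × n matrix, b ∈ ℝᵐ, and τ, σ > 0. Define H_{1,σ} : ℝⁿ → ℝ by H_{1,σ}(x) = ‖Ax − b‖₂² + 2τ ∑_{k=1}^n ( x_k · erf(x_k/(√2 σ)) + √(2/π) · σ · exp(−x_k²/(2σ²)) ). Then H_{1,σ} is differentiable everywhere, and its gradient is ∇H_{1,σ}(x) = 2Aᵀ(Ax − b) + 2τ v(x), where v(x) ∈ ℝⁿ is the vector with components v(x)_k = erf(x_k/(√2 σ)). -/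
/-!
Every summand of `H1` is a smooth function `g (⟪a, z⟫)` of a single linear functional (a row
of `A`, or a coordinate), whose gradient is `g' (⟪a, x⟫) • a`. For the regulariser,
`φ_σ' = erf (· / (√2 σ))`: differentiating `t * erf (t / (√2 σ))` produces a Gaussian term
which cancels exactly against the derivative of `√(2/π) σ exp (-t² / (2σ²))`.
-/
open Real Finset Matrix

/-- The smoothed ℓ₁ regularized least-squares functional
`H_{1,σ}(x) = ‖Ax − b‖₂² + 2τ ∑_k (x_k erf(x_k/(√2σ)) + √(2/π) σ exp(−x_k²/(2σ²)))`. -/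
noncomputable def H1 {m n : ℕ} (A : Matrix (Fin m) (Fin n) ℝ) (b : Fin m → ℝ)
    (τ σ : ℝ) (x : EuclideanSpace ℝ (Fin n)) : ℝ :=
  (∑ i, (A.mulVec x - b) i ^ 2)
    + 2 * τ * ∑ k, (x k * erf (x k / (Real.sqrt 2 * σ))
        + Real.sqrt (2 / π) * σ * Real.exp (-(x k) ^ 2 / (2 * σ ^ 2)))

section Gradient

variable {𝕜 F : Type*} [RCLike 𝕜] [NormedAddCommGroup F] [InnerProductSpace 𝕜 F] [CompleteSpace F]
  {f g : F → 𝕜} {f' g' x : F}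

theorem HasGradientAt.add (hf : HasGradientAt f f' x) (hg : HasGradientAt g g' x) :
    HasGradientAt (fun z => f z + g z) (f' + g') x := by
  rw [hasGradientAt_iff_hasFDerivAt, map_add]
  exact hf.hasFDerivAt.add hg.hasFDerivAt

theorem HasGradientAt.fun_sum {ι : Type*} {s : Finset ι} {f : ι → F → 𝕜} {f' : ι → F}
    (hf : ∀ i ∈ s, HasGradientAt (f i) (f' i) x) :
    HasGradientAt (fun z => ∑ i ∈ s, f i z) (∑ i ∈ s, f' i) x := by
  rw [hasGradientAt_iff_hasFDerivAt, map_sum]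
  exact HasFDerivAt.fun_sum fun i hi => (hf i hi).hasFDerivAt

end Gradient

open scoped InnerProductSpace

theorem HasDerivAt.hasGradientAt_comp_inner {F : Type*} [NormedAddCommGroup F]
    [InnerProductSpace ℝ F] [CompleteSpace F] {g : ℝ → ℝ} {g' : ℝ} {a x : F}
    (hg : HasDerivAt g g' ⟪a, x⟫_ℝ) :
    HasGradientAt (fun z => g ⟪a, z⟫_ℝ) (g' • a) x := by
  rw [hasGradientAt_iff_hasFDerivAt, map_smul]
  exact hg.comp_hasFDerivAt x (innerSL ℝ a).hasFDerivAt

namespace EuclideanSpace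

variable {ι : Type*} [Fintype ι]

theorem hasGradientAt_sum_comp_apply {g : ι → ℝ → ℝ} {g' : ι → ℝ} {x : EuclideanSpace ℝ ι}
    (hg : ∀ k, HasDerivAt (g k) (g' k) (x k)) :
    HasGradientAt (fun z : EuclideanSpace ℝ ι => ∑ k, g k (z k)) (WithLp.toLp 2 g') x := by
  classical
  have hcoord (k) : HasGradientAt (fun z : EuclideanSpace ℝ ι => g k (z k))
      (g' k • single k 1) x := by
    have hgk : HasDerivAt (g k) (g' k) ⟪single k (1 : ℝ), x⟫_ℝ := by
      simpa [inner_single_left] using hg k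
    simpa [inner_single_left] using hgk.hasGradientAt_comp_inner
  convert HasGradientAt.fun_sum fun k _ => hcoord k using 1
  ext k
  simp [Pi.single_apply]

end EuclideanSpace

theorem Matrix.hasGradientAt_sum_sq_mulVec_sub {ι κ : Type*} [Fintype ι] [Fintype κ]
    (A : Matrix κ ι ℝ) (b : κ → ℝ) (x : EuclideanSpace ℝ ι) :
    HasGradientAt (fun z : EuclideanSpace ℝ ι => ∑ i, (A *ᵥ z - b) i ^ 2)
      (WithLp.toLp 2 (2 • Aᵀ *ᵥ (A *ᵥ x - b))) x := by
  have hrow (i) (z : EuclideanSpace ℝ ι) : (A *ᵥ z) i = ⟪WithLp.toLp 2 (A i), z⟫_ℝ := by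
    simp [PiLp.inner_apply, mulVec, dotProduct, mul_comm]
  have hterm (i) : HasGradientAt (fun z : EuclideanSpace ℝ ι => (A *ᵥ z - b) i ^ 2)
      ((2 * (A *ᵥ x - b) i) • WithLp.toLp 2 (A i)) x := by
    have hsq : HasDerivAt (fun s => (s - b i) ^ 2) (2 * (A *ᵥ x - b) i)
        ⟪WithLp.toLp 2 (A i), x⟫_ℝ := by
      simpa [← hrow] using ((hasDerivAt_id _).sub_const (b i)).fun_pow 2
    simpa [← hrow] using hsq.hasGradientAt_comp_inner
  convert HasGradientAt.fun_sum fun i _ => hterm i using 1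
  ext k
  simp [mulVec, dotProduct, Finset.mul_sum, mul_comm, mul_left_comm]

theorem hasDerivAt_erf (t : ℝ) : HasDerivAt erf (2 / √π * exp (-t ^ 2)) t := by
  have hc : Continuous fun u : ℝ => exp (-u ^ 2) := by fun_prop
  exact (intervalIntegral.integral_hasDerivAt_right (hc.intervalIntegrable 0 t)
    (hc.stronglyMeasurableAtFilter _ _) hc.continuousAt).const_mul _

/-- `φ_σ t = 𝔼 |t + σ Z|` for a standard Gaussian `Z`: a smoothing of `|t|`. -/
noncomputable def smoothAbs (σ t : ℝ) : ℝ :=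
  t * erf (t / (√2 * σ)) + √(2 / π) * σ * exp (-t ^ 2 / (2 * σ ^ 2))

theorem hasDerivAt_smoothAbs {σ : ℝ} (hσ : σ ≠ 0) (t : ℝ) :
    HasDerivAt (smoothAbs σ) (erf (t / (√2 * σ))) t := by
  have hexp : -(t / (√2 * σ)) ^ 2 = -t ^ 2 / (2 * σ ^ 2) := by
    rw [div_pow, mul_pow, sq_sqrt zero_le_two]; ring
  have herf : HasDerivAt (fun s => erf (s / (√2 * σ)))
      (2 / √π * exp (-t ^ 2 / (2 * σ ^ 2)) * (1 / (√2 * σ))) t := by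
    rw [← hexp]
    exact (hasDerivAt_erf _).comp t ((hasDerivAt_id' t).div_const _)
  have hgauss := ((hasDerivAt_id' t).fun_pow 2).fun_neg.div_const (2 * σ ^ 2) |>.exp
  refine ((hasDerivAt_id' t).fun_mul herf |>.add (hgauss.const_mul (√(2 / π) * σ))).congr_deriv ?_
  rw [sqrt_div zero_le_two]
  field_simp
  rw [sq_sqrt zero_le_two]
  norm_num
  ring

theorem gradient_H1_general {m n : ℕ} (A : Matrix (Fin m) (Fin n) ℝ) (b : Fin m → ℝ)
    (τ σ : ℝ) (hσ : 0 < σ) :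
    Differentiable ℝ (H1 A b τ σ) ∧
      ∀ x : EuclideanSpace ℝ (Fin n),
        HasGradientAt (H1 A b τ σ)
          (WithLp.toLp 2 (fun k => 2 * (Aᵀ.mulVec (A.mulVec x - b)) k
              + 2 * τ * erf (x k / (Real.sqrt 2 * σ))) : EuclideanSpace ℝ (Fin n)) x := by
  have hH1 : H1 A b τ σ = fun z : EuclideanSpace ℝ (Fin n) =>
      ∑ i, (A *ᵥ z - b) i ^ 2 + ∑ k, 2 * τ * smoothAbs σ (z k) := by
    funext z
    rw [H1, mul_sum]
    rfl
  have hgrad (x : EuclideanSpace ℝ (Fin n)) : HasGradientAt (H1 A b τ σ)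
      (WithLp.toLp 2 (fun k => 2 * (Aᵀ.mulVec (A.mulVec x - b)) k
        + 2 * τ * erf (x k / (Real.sqrt 2 * σ)))) x := by
    have hreg := EuclideanSpace.hasGradientAt_sum_comp_apply
      fun k => (hasDerivAt_smoothAbs hσ.ne' (x k)).const_mul (2 * τ)
    rw [hH1]
    convert (A.hasGradientAt_sum_sq_mulVec_sub b x).add hreg using 1
    ext k
    simp
  exact ⟨fun x => (hgrad x).differentiableAt, hgrad⟩

/-- `H_{1,σ}` is differentiable everywhere with gradient
`∇H_{1,σ}(x) = 2Aᵀ(Ax − b) + 2τ·(erf(x_k/(√2σ)))_k`. -/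
theorem gradient_H1 {m n : ℕ} (A : Matrix (Fin m) (Fin n) ℝ) (b : Fin m → ℝ)
    (τ σ : ℝ) (hτ : 0 < τ) (hσ : 0 < σ) :
    Differentiable ℝ (H1 A b τ σ) ∧
      ∀ x : EuclideanSpace ℝ (Fin n),
        HasGradientAt (H1 A b τ σ)
          (WithLp.toLp 2 (fun k => 2 * (Aᵀ.mulVec (A.mulVec x - b)) k
              + 2 * τ * erf (x k / (Real.sqrt 2 * σ))) : EuclideanSpace ℝ (Fin n)) x :=
  gradient_H1_general A b τ σ hσ
end
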